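/- arXiv:1406.1025 — 6 statements merged into one kernel-verified Lean document; each statement's English description precedes it below -/
import Mathlib

section
/- Let p(x) be a monic polynomial of degree n over ℂ and β₁,…,βₙ pairwise distinct complex numbers. Then p(x) = det(xI - D + e wᵗ), where D = diag(β₁,…,βₙ), e = (1,…,1)ᵗ, and w is the vector with entries wᵢ = p(βᵢ)/∏_{j≠i}(βᵢ - βⱼ). -/
/-!
Subtracting the monic nodal polynomial `∏ᵢ (X - βᵢ)` from `p` leaves a polynomial of degree `< n`,
which equals its Lagrange interpolant at the nodes `βᵢ`; this gives
`p = ∏ᵢ (X - βᵢ) + ∑ⱼ wⱼ ∏_{k ≠ j} (X - βₖ)`. The matrix determinant lemma for the rank-one update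
`e wᵗ` of the diagonal matrix `X I - D` yields the same expression.
-/

open Polynomial Matrix Finset

namespace Matrix

variable {m : Type*} [Fintype m] [DecidableEq m]

theorem det_diagonal_add_vecMulVec_of_isUnit {R : Type*} [CommRing R] {d : m → R}
    (hd : ∀ i, IsUnit (d i)) (u w : m → R) :
    det (diagonal d + vecMulVec u w) = ∏ i, d i + ∑ j, w j * u j * ∏ k ∈ univ.erase j, d k := by
  have hA : IsUnit (diagonal d).det := by
    rw [det_diagonal]
    exact IsUnit.prod_univ_iff.mpr hd
  have hinv (j : m) : Ring.inverse d j * d j = 1 :=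
    congr_fun (Ring.inverse_mul_cancel d (Pi.isUnit_iff.mpr hd)) j
  rw [vecMulVec_eq Unit, det_add_replicateCol_mul_replicateRow hA, inv_diagonal, det_diagonal,
    det_unique]
  simp only [add_apply, one_apply_eq, mul_apply, replicateRow_apply, replicateCol_apply,
    diagonal_apply, mul_ite, mul_zero, sum_ite_eq', mem_univ, if_true]
  rw [mul_add, mul_one, mul_sum]
  refine congrArg _ (sum_congr rfl fun j _ => ?_)
  rw [← mul_prod_erase univ d (mem_univ j)]
  linear_combination (w j * u j * ∏ k ∈ univ.erase j, d k) * hinv j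

theorem det_diagonal_add_vecMulVec {R : Type*} [CommRing R] [IsDomain R] {d : m → R}
    (hd : ∀ i, d i ≠ 0) (u w : m → R) :
    det (diagonal d + vecMulVec u w) = ∏ i, d i + ∑ j, w j * u j * ∏ k ∈ univ.erase j, d k := by
  let φ := algebraMap R (FractionRing R)
  apply IsFractionRing.injective R (FractionRing R)
  have hφd (i : m) : IsUnit (φ (d i)) :=
    ((map_ne_zero_iff φ (IsFractionRing.injective _ _)).mpr (hd i)).isUnit
  have hmap : (vecMulVec u w).map φ = vecMulVec (φ ∘ u) (φ ∘ w) := by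
    ext i j; simp [vecMulVec_apply]
  rw [RingHom.map_det, RingHom.mapMatrix_apply, Matrix.map_add _ (map_add φ),
    diagonal_map (map_zero φ), hmap, det_diagonal_add_vecMulVec_of_isUnit hφd]
  simp [φ]

end Matrix

namespace Lagrange

theorem eq_nodal_add_sum_nodalWeight_mul {F : Type*} [Field F] {ι : Type*} [DecidableEq ι]
    {s : Finset ι} {v : ι → F} (hvs : Set.InjOn v s) {p : F[X]} (hp : p.Monic)
    (hdeg : p.natDegree = #s) :
    p = nodal s v + ∑ i ∈ s, C (p.eval (v i) * nodalWeight s v i) * nodal (s.erase i) v := by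
  have hdegree : p.degree = (nodal s v).degree := by
    rw [degree_nodal, degree_eq_natDegree hp.ne_zero, hdeg]
  have hlt : (p - nodal s v).degree < #s := by
    simpa [degree_eq_natDegree hp.ne_zero, hdeg] using
      degree_sub_lt_left hdegree hp.ne_zero (by rw [hp.leadingCoeff, nodal_monic.leadingCoeff])
  rw [← sub_eq_iff_eq_add', eq_interpolate hvs hlt, interpolate_eq_nodalWeight_mul_nodal_div_X_sub_C]
  refine sum_congr rfl fun i hi => ?_
  rw [← nodal_erase_eq_nodal_div hi, eval_sub, eval_nodal_at_node hi, sub_zero, C_mul]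
  ring

end Lagrange

/-- secular representation `p(x) = det(xI - D + e wᵗ)` of a monic
scalar polynomial, with `D = diag(β₁,…,βₙ)` and `wᵢ = p(βᵢ)/∏_{j≠i}(βᵢ-βⱼ)`. -/
theorem secular_det_representation (n : ℕ) (p : Polynomial ℂ)
    (hp : p.Monic) (hdeg : p.natDegree = n)
    (β : Fin n → ℂ) (hβ : Function.Injective β) :
    p = Matrix.det
      ((Polynomial.X : Polynomial ℂ) • (1 : Matrix (Fin n) (Fin n) (Polynomial ℂ))
        - Matrix.diagonal (fun i => Polynomial.C (β i))
        + Matrix.of (fun i j : Fin n =>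
            Polynomial.C (p.eval (β j) /
              (Finset.univ.erase j).prod (fun k => β j - β k)))) := by
  have hmatrix : (X : ℂ[X]) • (1 : Matrix (Fin n) (Fin n) ℂ[X]) - diagonal (fun i => C (β i))
      + of (fun _ j => C (p.eval (β j) / ∏ k ∈ univ.erase j, (β j - β k)))
      = diagonal (fun i => X - C (β i))
        + vecMulVec 1 (fun j => C (p.eval (β j) / ∏ k ∈ univ.erase j, (β j - β k))) := by
    rw [smul_one_eq_diagonal, diagonal_sub]
    congr 1
    ext _ j
    simp [vecMulVec_apply]
  have hcard : p.natDegree = #(univ : Finset (Fin n)) := by rw [card_univ, Fintype.card_fin, hdeg]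
  rw [hmatrix, det_diagonal_add_vecMulVec fun i => X_sub_C_ne_zero (β i)]
  conv_lhs => rw [Lagrange.eq_nodal_add_sum_nodalWeight_mul hβ.injOn hp hcard]
  simp [Lagrange.nodal_eq, Lagrange.nodalWeight, div_eq_mul_inv, prod_inv_distrib]
end

section
/- Let P(x) be an m×m matrix polynomial, B₁(x),…,B_q(x) regular pairwise commuting and pairwise right coprime m×m matrix polynomials, W₁(x),…,W_q(x) m×m matrix polynomials, Cᵢ(x) = ∏_{j≠i} Bⱼ(x), and suppose P(x) = ∏ᵢ Bᵢ(x) + Σᵢ Wᵢ(x)Cᵢ(x). Then A(x) = diag(B₁(x),…,B_q(x)) + (e ⊗ I_m)[W₁(x),…,W_q(x)] is equivalent to P(x): there exist unimodular qm×qm matrix polynomials E(x), F(x) with E(x)A(x)F(x) = I_{m(q−1)} ⊕ P(x). -/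
open Polynomial Matrix

/-- Ordered product `B₁(x)⋯B_q(x)` of matrix polynomials. -/
noncomputable def mpProd {q m : ℕ} (f : Fin q → Matrix (Fin m) (Fin m) (Polynomial ℂ)) :
    Matrix (Fin m) (Fin m) (Polynomial ℂ) :=
  ((List.finRange q).map f).prod

/-- Ordered product `Cᵢ(x) = ∏_{j≠i} Bⱼ(x)`. -/
noncomputable def mpProdErase {q m : ℕ} (f : Fin q → Matrix (Fin m) (Fin m) (Polynomial ℂ))
    (i : Fin q) : Matrix (Fin m) (Fin m) (Polynomial ℂ) :=
  (((List.finRange q).erase i).map f).prod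

/-- The secular matrix polynomial
`A(x) = diag(B₁(x),…,B_q(x)) + (e ⊗ I_m)[W₁(x),…,W_q(x)]`. -/
noncomputable def secA {q m : ℕ} (B W : Fin q → Matrix (Fin m) (Fin m) (Polynomial ℂ)) :
    Matrix (Fin q × Fin m) (Fin q × Fin m) (Polynomial ℂ) :=
  Matrix.of fun p₁ p₂ : Fin q × Fin m =>
    (if p₁.1 = p₂.1 then B p₁.1 p₁.2 p₂.2 else 0) + W p₂.1 p₁.2 p₂.2

/-- Unimodular matrix polynomial: the determinant is a nonzero constant. -/
noncomputable def Unimodular {k : Type*} [Fintype k] [DecidableEq k]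
    (M : Matrix k k (Polynomial ℂ)) : Prop :=
  ∃ c : ℂ, c ≠ 0 ∧ M.det = Polynomial.C c

/-- The block diagonal matrix `I_{m(q-1)} ⊕ P(x)`, with `P` in the last block. -/
noncomputable def dsumIP (q m : ℕ) (P : Matrix (Fin m) (Fin m) (Polynomial ℂ)) :
    Matrix (Fin q × Fin m) (Fin q × Fin m) (Polynomial ℂ) :=
  Matrix.of fun p₁ p₂ : Fin q × Fin m =>
    if p₁.1 = p₂.1 then
      (if (p₁.1 : ℕ) = q - 1 then P p₁.2 p₂.2
       else if p₁.2 = p₂.2 then 1 else 0)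
    else 0

/-!
Induction on `q`, merging the first two pairs. Right coprimality gives `B₀ α + B₁ β = 1`, and
since `B₀` and `B₁` commute, the block matrix `[[α, B₁], [-β, B₀]] ⊕ I` has determinant
`det (B₀ α + B₁ β) = 1`. Subtracting the second block row of `A` from the first and then
multiplying on the right by that matrix turns `A` into `[[I, 0], [Z, A']]`, where `A'` is the
secular matrix of the `q - 1` pairs `(B₁ B₀, W₀ B₁ + W₁ B₀), (B₂, W₂), …`. These pairs give the
same `P`, and `B₁ B₀, B₂, …` are again regular, commuting and pairwise right coprime.
-/

section RightCoprime

variable {A : Type*} [Ring A] {a b c : A}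

def IsRightCoprime (a b : A) : Prop := ∃ x y, a * x + b * y = 1

theorem IsRightCoprime.symm (h : IsRightCoprime a b) : IsRightCoprime b a := by
  obtain ⟨x, y, h⟩ := h
  exact ⟨y, x, by rw [add_comm, h]⟩

theorem IsRightCoprime.mul_left (hac : IsRightCoprime a c) (hbc : IsRightCoprime b c)
    (hcomm : Commute b c) : IsRightCoprime (b * a) c := by
  obtain ⟨x, y, hxy⟩ := hac
  obtain ⟨u, v, huv⟩ := hbc
  refine ⟨x * u, b * y * u + v, ?_⟩
  calc b * a * (x * u) + c * (b * y * u + v) = b * a * x * u + c * b * y * u + c * v := by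
        noncomm_ring
    _ = b * (a * x + c * y) * u + c * v := by rw [← hcomm.eq]; noncomm_ring
    _ = 1 := by rw [hxy, mul_one, huv]

theorem IsRightCoprime.mul_right (hca : IsRightCoprime c a) (hcb : IsRightCoprime c b)
    (hcomm : Commute c b) : IsRightCoprime c (b * a) :=
  (hca.symm.mul_left hcb.symm hcomm.symm).symm

end RightCoprime

section Blocks

variable {R : Type*} [CommRing R] {n ι : Type*}

def diagBlocks [DecidableEq ι] (D : ι → Matrix n n R) : Matrix (ι × n) (ι × n) R :=
  of fun p p' => if p.1 = p'.1 then D p.1 p.2 p'.2 else 0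

def rowBlocks (V : ι → Matrix n n R) : Matrix n (ι × n) R :=
  of fun x p => V p.1 x p.2

def colBlocks (V : ι → Matrix n n R) : Matrix (ι × n) n R :=
  of fun p y => V p.1 p.2 y

theorem rowBlocks_add (V U : ι → Matrix n n R) :
    rowBlocks (V + U) = rowBlocks V + rowBlocks U := rfl

variable [Fintype n]

theorem mul_rowBlocks (M : Matrix n n R) (V : ι → Matrix n n R) :
    M * rowBlocks V = rowBlocks fun i => M * V i := by
  ext x ⟨i, y⟩
  simp [rowBlocks, mul_apply]

theorem colBlocks_mul (V : ι → Matrix n n R) (M : Matrix n n R) :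
    colBlocks V * M = colBlocks fun i => V i * M := by
  ext ⟨i, x⟩ y
  simp [colBlocks, mul_apply]

theorem mul_rowBlocks_single [DecidableEq ι] (M b : Matrix n n R) (i : ι) :
    M * rowBlocks (Pi.single i b) = rowBlocks (Pi.single i (M * b)) := by
  rw [mul_rowBlocks]
  congr 1
  ext1 j
  rcases eq_or_ne j i with rfl | h <;> simp [*]

variable [Fintype ι]

theorem rowBlocks_mul_colBlocks (V U : ι → Matrix n n R) :
    rowBlocks V * colBlocks U = ∑ i, V i * U i := by
  ext x y
  simp [rowBlocks, colBlocks, mul_apply, Fintype.sum_prod_type, Matrix.sum_apply]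

variable [DecidableEq ι]

theorem rowBlocks_mul_diagBlocks (V D : ι → Matrix n n R) :
    rowBlocks V * diagBlocks D = rowBlocks (V * D) := by
  ext x ⟨i, y⟩
  simp [rowBlocks, diagBlocks, mul_apply, Fintype.sum_prod_type]

theorem diagBlocks_mul_diagBlocks (D D' : ι → Matrix n n R) :
    diagBlocks D * diagBlocks D' = diagBlocks (D * D') := by
  ext ⟨i, x⟩ ⟨j, y⟩
  by_cases h : i = j
  · subst h; simp [diagBlocks, mul_apply, Fintype.sum_prod_type]
  · simp [diagBlocks, mul_apply, Fintype.sum_prod_type, h]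

theorem det_diagBlocks [DecidableEq n] (D : ι → Matrix n n R) :
    (diagBlocks D).det = ∏ i, (D i).det := by
  have h : diagBlocks D =
      (blockDiagonal D).submatrix (Equiv.prodComm ι n) (Equiv.prodComm ι n) := by
    ext ⟨i, x⟩ ⟨j, y⟩
    simp [diagBlocks, blockDiagonal_apply]
  rw [h, det_submatrix_equiv_self, det_blockDiagonal]

theorem rowBlocks_single_mul_colBlocks (b : Matrix n n R) (i : ι) (U : ι → Matrix n n R) :
    rowBlocks (Pi.single i b) * colBlocks U = b * U i := by
  rw [rowBlocks_mul_colBlocks, Fintype.sum_eq_single i (fun j hj => by simp [hj]),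
    Pi.single_eq_same]

theorem rowBlocks_single_mul_diagBlocks (b : Matrix n n R) (i : ι) (D : ι → Matrix n n R) :
    rowBlocks (Pi.single i b) * diagBlocks D = rowBlocks (Pi.single i (b * D i)) := by
  rw [rowBlocks_mul_diagBlocks, ← Pi.single_mul_left]

theorem det_diagBlocks_update_one [DecidableEq n] (b : Matrix n n R) (i : ι) :
    (diagBlocks (Function.update 1 i b)).det = b.det := by
  rw [det_diagBlocks, Fintype.prod_eq_single i (fun j hj => by simp [hj]), Function.update_self]

end Blocks

def finSuccProdEquiv (q : ℕ) (n : Type*) : Fin (q + 1) × n ≃ n ⊕ Fin q × n where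
  toFun p := Fin.cases (Sum.inl p.2) (fun j => Sum.inr (j, p.2)) p.1
  invFun := Sum.elim (fun x => (0, x)) fun p => (p.1.succ, p.2)
  left_inv := by
    rintro ⟨i, x⟩
    cases i using Fin.cases <;> simp
  right_inv := by rintro (x | ⟨j, y⟩) <;> simp

@[simp] theorem finSuccProdEquiv_zero {q : ℕ} {n : Type*} (x : n) :
    finSuccProdEquiv q n (0, x) = Sum.inl x := rfl

@[simp] theorem finSuccProdEquiv_succ {q : ℕ} {n : Type*} (j : Fin q) (x : n) :
    finSuccProdEquiv q n (j.succ, x) = Sum.inr (j, x) := rfl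

section CoprimeBlock

variable {R : Type*} [CommRing R] {n ι : Type*} [Fintype n] [DecidableEq n] [Fintype ι]
  [DecidableEq ι]

def coprimeBlock (i : ι) (b₀ b₁ α β : Matrix n n R) : Matrix (n ⊕ ι × n) (n ⊕ ι × n) R :=
  fromBlocks α (rowBlocks (Pi.single i b₁)) (-colBlocks (Pi.single i β))
    (diagBlocks (Function.update 1 i b₀))

variable {i : ι} {b₀ b₁ α β : Matrix n n R}

theorem fromBlocks_mul_coprimeBlock (hαβ : b₀ * α + b₁ * β = 1) (hb : Commute b₀ b₁)
    {k : Type*} [Fintype k] (C : Matrix k n R) (D : Matrix k (ι × n) R) :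
    fromBlocks b₀ (-rowBlocks (Pi.single i b₁)) C D * coprimeBlock i b₀ b₁ α β =
      fromBlocks 1 0 (C * α - D * colBlocks (Pi.single i β))
        (C * rowBlocks (Pi.single i b₁) + D * diagBlocks (Function.update 1 i b₀)) := by
  simp only [coprimeBlock, fromBlocks_multiply, mul_rowBlocks_single, Matrix.neg_mul,
    Matrix.mul_neg, neg_neg, rowBlocks_single_mul_colBlocks, rowBlocks_single_mul_diagBlocks, Pi.single_eq_same,
    Function.update_self, hαβ, hb.eq, add_neg_cancel, sub_eq_add_neg]

theorem det_coprimeBlock [IsDomain R] (h₀ : b₀.det ≠ 0) (hαβ : b₀ * α + b₁ * β = 1)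
    (hb : Commute b₀ b₁) : (coprimeBlock i b₀ b₁ α β).det = 1 := by
  -- `[[b₀, -b₁], [0, 1]] * coprimeBlock` is block triangular with diagonal `1, diag(b₀, 1, …)`
  have h := congrArg det (fromBlocks_mul_coprimeBlock (i := i) hαβ hb 0 1)
  simp only [Matrix.zero_mul, Matrix.one_mul, zero_add, det_mul, det_fromBlocks_zero₂₁,
    det_fromBlocks_zero₁₂, det_diagBlocks_update_one, det_one, mul_one, one_mul] at h
  exact (mul_eq_left₀ h₀).mp h

end CoprimeBlock

section Unimodular

variable {ι κ : Type*} [Fintype ι] [DecidableEq ι] [Fintype κ] [DecidableEq κ]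
  {M N A A' A'' : Matrix ι ι ℂ[X]}

theorem unimodular_of_det_eq_one (h : M.det = 1) : Unimodular M :=
  ⟨1, one_ne_zero, by rw [h, C_1]⟩

theorem Unimodular.mul (hM : Unimodular M) (hN : Unimodular N) : Unimodular (M * N) := by
  obtain ⟨c, hc, hMc⟩ := hM
  obtain ⟨d, hd, hNd⟩ := hN
  exact ⟨c * d, mul_ne_zero hc hd, by rw [det_mul, hMc, hNd, C_mul]⟩

theorem Unimodular.submatrix (hM : Unimodular M) (e : κ ≃ ι) : Unimodular (M.submatrix e e) := by
  rwa [Unimodular, det_submatrix_equiv_self]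

theorem Unimodular.fromBlocks_one (hM : Unimodular M) :
    Unimodular (fromBlocks (1 : Matrix κ κ ℂ[X]) 0 0 M) := by
  rwa [Unimodular, det_fromBlocks_zero₂₁, det_one, one_mul]

def UnimodularEquiv (A A' : Matrix ι ι ℂ[X]) : Prop :=
  ∃ E F, Unimodular E ∧ Unimodular F ∧ E * A * F = A'

theorem UnimodularEquiv.refl (A : Matrix ι ι ℂ[X]) : UnimodularEquiv A A :=
  ⟨1, 1, unimodular_of_det_eq_one det_one, unimodular_of_det_eq_one det_one, by simp⟩

theorem unimodularEquiv_mul (M : Matrix ι ι ℂ[X]) {E F : Matrix ι ι ℂ[X]} (hE : Unimodular E)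
    (hF : Unimodular F) : UnimodularEquiv M (E * M * F) :=
  ⟨E, F, hE, hF, rfl⟩

theorem UnimodularEquiv.trans (h : UnimodularEquiv A A') (h' : UnimodularEquiv A' A'') :
    UnimodularEquiv A A'' := by
  obtain ⟨E, F, hE, hF, rfl⟩ := h
  obtain ⟨E', F', hE', hF', rfl⟩ := h'
  exact ⟨E' * E, F * F', hE'.mul hE, hF.mul hF', by simp only [Matrix.mul_assoc]⟩

theorem UnimodularEquiv.submatrix (h : UnimodularEquiv A A') (e : κ ≃ ι) :
    UnimodularEquiv (A.submatrix e e) (A'.submatrix e e) := by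
  obtain ⟨E, F, hE, hF, rfl⟩ := h
  exact ⟨E.submatrix e e, F.submatrix e e, hE.submatrix e, hF.submatrix e,
    by rw [submatrix_mul_equiv, submatrix_mul_equiv]⟩

theorem UnimodularEquiv.fromBlocks_one (h : UnimodularEquiv A A') :
    UnimodularEquiv (fromBlocks (1 : Matrix κ κ ℂ[X]) 0 0 A) (fromBlocks 1 0 0 A') := by
  obtain ⟨E, F, hE, hF, rfl⟩ := h
  exact ⟨fromBlocks 1 0 0 E, fromBlocks 1 0 0 F, hE.fromBlocks_one, hF.fromBlocks_one,
    by simp [fromBlocks_multiply]⟩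

theorem unimodularEquiv_fromBlocks_one_zero (Z : Matrix ι κ ℂ[X]) (A : Matrix ι ι ℂ[X]) :
    UnimodularEquiv (fromBlocks (1 : Matrix κ κ ℂ[X]) 0 Z A) (fromBlocks 1 0 0 A) := by
  convert unimodularEquiv_mul _ (E := fromBlocks 1 0 (-Z) 1) (F := 1)
    (unimodular_of_det_eq_one (by simp))
    (unimodular_of_det_eq_one det_one) using 1
  simp [fromBlocks_multiply]

end Unimodular

section Secular

variable {m q : ℕ}

theorem secA_eq_diagBlocks_add (B W : Fin q → Matrix (Fin m) (Fin m) ℂ[X]) :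
    secA B W =
      diagBlocks B + colBlocks (1 : Fin q → Matrix (Fin m) (Fin m) ℂ[X]) * rowBlocks W := by
  refine Matrix.ext fun ⟨i, x⟩ ⟨j, y⟩ => ?_
  simp [secA, diagBlocks, colBlocks, rowBlocks, Matrix.mul_apply, one_apply]

theorem secA_cons (b w : Matrix (Fin m) (Fin m) ℂ[X]) (B W : Fin q → Matrix (Fin m) (Fin m) ℂ[X]) :
    secA (Fin.cons b B) (Fin.cons w W) =
      (fromBlocks (b + w) (rowBlocks W) (colBlocks fun _ => w) (secA B W)).submatrix
        (finSuccProdEquiv q (Fin m)) (finSuccProdEquiv q (Fin m)) := by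
  refine Matrix.ext fun ⟨i, x⟩ ⟨j, y⟩ => ?_
  cases i using Fin.cases <;> cases j using Fin.cases <;>
    simp [secA, rowBlocks, colBlocks, Fin.succ_ne_zero, (Fin.succ_ne_zero _).symm]

theorem dsumIP_add_two (P : Matrix (Fin m) (Fin m) ℂ[X]) :
    dsumIP (q + 2) m P = (fromBlocks 1 0 0 (dsumIP (q + 1) m P)).submatrix
      (finSuccProdEquiv (q + 1) (Fin m)) (finSuccProdEquiv (q + 1) (Fin m)) := by
  refine Matrix.ext fun ⟨i, x⟩ ⟨j, y⟩ => ?_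
  cases i using Fin.cases <;> cases j using Fin.cases <;>
    simp [dsumIP, one_apply, Fin.succ_ne_zero, (Fin.succ_ne_zero _).symm]

theorem secA_fin_one (B W : Fin 1 → Matrix (Fin m) (Fin m) ℂ[X]) :
    secA B W = dsumIP 1 m (B 0 + W 0) := by
  refine Matrix.ext fun ⟨i, x⟩ ⟨j, y⟩ => ?_
  simp [secA, dsumIP, Subsingleton.elim i 0, Subsingleton.elim j 0]

theorem mpProd_cons (b : Matrix (Fin m) (Fin m) ℂ[X]) (B : Fin q → Matrix (Fin m) (Fin m) ℂ[X]) :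
    mpProd (Fin.cons b B) = b * mpProd B := by
  simp [mpProd, List.finRange_succ, List.map_map]

theorem mpProdErase_cons_zero (b : Matrix (Fin m) (Fin m) ℂ[X])
    (B : Fin q → Matrix (Fin m) (Fin m) ℂ[X]) : mpProdErase (Fin.cons b B) 0 = mpProd B := by
  simp [mpProdErase, mpProd, List.finRange_succ, List.map_map]

theorem mpProdErase_cons_succ (b : Matrix (Fin m) (Fin m) ℂ[X])
    (B : Fin q → Matrix (Fin m) (Fin m) ℂ[X]) (j : Fin q) :
    mpProdErase (Fin.cons b B) j.succ = b * mpProdErase B j := by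
  rw [mpProdErase, List.finRange_succ, List.erase_cons_tail (by simp [(Fin.succ_ne_zero j).symm]),
    ← List.map_erase (Fin.succ_injective q), List.map_cons, List.prod_cons, List.map_map]
  simp [mpProdErase]

noncomputable def secularPoly (B W : Fin q → Matrix (Fin m) (Fin m) ℂ[X]) :
    Matrix (Fin m) (Fin m) ℂ[X] :=
  mpProd B + ∑ i, W i * mpProdErase B i

theorem secularPoly_fin_one (B W : Fin 1 → Matrix (Fin m) (Fin m) ℂ[X]) :
    secularPoly B W = B 0 + W 0 := by
  simp [secularPoly, mpProd, mpProdErase, List.finRange_succ]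

theorem secularPoly_cons_cons (b₀ b₁ w₀ w₁ : Matrix (Fin m) (Fin m) ℂ[X])
    (B W : Fin q → Matrix (Fin m) (Fin m) ℂ[X]) (hb : Commute b₀ b₁) :
    secularPoly (Fin.cons b₀ (Fin.cons b₁ B)) (Fin.cons w₀ (Fin.cons w₁ W)) =
      secularPoly (Fin.cons (b₁ * b₀) B) (Fin.cons (w₀ * b₁ + w₁ * b₀) W) := by
  simp only [secularPoly, mpProd_cons, Fin.sum_univ_succ, Fin.cons_zero, Fin.cons_succ,
    mpProdErase_cons_zero, mpProdErase_cons_succ, mul_assoc, hb.left_comm, add_mul]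
  abel

theorem secA_cons_merge (b₀ b₁ w₀ w₁ : Matrix (Fin m) (Fin m) ℂ[X])
    (B W : Fin q → Matrix (Fin m) (Fin m) ℂ[X]) :
    (colBlocks fun _ => w₀) * rowBlocks (Pi.single 0 b₁) +
        secA (Fin.cons b₁ B) (Fin.cons w₁ W) * diagBlocks (Function.update 1 0 b₀) =
      secA (Fin.cons (b₁ * b₀) B) (Fin.cons (w₀ * b₁ + w₁ * b₀) W) := by
  have hB : Fin.cons b₁ B * Function.update (1 : Fin (q + 1) → Matrix (Fin m) (Fin m) ℂ[X]) 0 b₀ =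
      Fin.cons (b₁ * b₀) B := by
    ext1 i; cases i using Fin.cases <;> simp
  have hW : Pi.single 0 (w₀ * b₁) +
      Fin.cons w₁ W * Function.update (1 : Fin (q + 1) → Matrix (Fin m) (Fin m) ℂ[X]) 0 b₀ =
      Fin.cons (w₀ * b₁ + w₁ * b₀) W := by
    ext1 i; cases i using Fin.cases <;> simp
  have hcol : (colBlocks fun _ : Fin (q + 1) => w₀) =
      colBlocks (1 : Fin (q + 1) → Matrix (Fin m) (Fin m) ℂ[X]) * w₀ := by
    simp [colBlocks_mul]
  rw [secA_eq_diagBlocks_add, secA_eq_diagBlocks_add, hcol, Matrix.add_mul, Matrix.mul_assoc,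
    Matrix.mul_assoc, mul_rowBlocks_single, rowBlocks_mul_diagBlocks, diagBlocks_mul_diagBlocks, hB,
    ← hW, rowBlocks_add, Matrix.mul_add]
  abel

theorem unimodularEquiv_secA_cons_cons (b₀ b₁ w₀ w₁ : Matrix (Fin m) (Fin m) ℂ[X])
    (B W : Fin q → Matrix (Fin m) (Fin m) ℂ[X]) (h₀ : b₀.det ≠ 0) (hcop : IsRightCoprime b₀ b₁)
    (hb : Commute b₀ b₁) :
    UnimodularEquiv (secA (Fin.cons b₀ (Fin.cons b₁ B)) (Fin.cons w₀ (Fin.cons w₁ W)))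
      ((fromBlocks 1 0 0 (secA (Fin.cons (b₁ * b₀) B) (Fin.cons (w₀ * b₁ + w₁ * b₀) W))).submatrix
        (finSuccProdEquiv (q + 1) (Fin m)) (finSuccProdEquiv (q + 1) (Fin m))) := by
  obtain ⟨α, β, hαβ⟩ := hcop
  rw [secA_cons]
  refine UnimodularEquiv.submatrix ?_ _
  let E : Matrix (Fin m ⊕ Fin (q + 1) × Fin m) (Fin m ⊕ Fin (q + 1) × Fin m) ℂ[X] :=
    fromBlocks 1 (-rowBlocks (Pi.single 0 1)) 0 1
  have hE : E * fromBlocks (b₀ + w₀) (rowBlocks (Fin.cons w₁ W)) (colBlocks fun _ => w₀)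
      (secA (Fin.cons b₁ B) (Fin.cons w₁ W)) = fromBlocks b₀ (-rowBlocks (Pi.single 0 b₁))
      (colBlocks fun _ => w₀) (secA (Fin.cons b₁ B) (Fin.cons w₁ W)) := by
    simp [E, fromBlocks_multiply, secA_eq_diagBlocks_add, Matrix.mul_add, ← Matrix.mul_assoc,
      rowBlocks_single_mul_colBlocks, rowBlocks_single_mul_diagBlocks]
  refine (unimodularEquiv_mul _ (E := E) (F := coprimeBlock 0 b₀ b₁ α β)
    (unimodular_of_det_eq_one (by simp [E]))
    (unimodular_of_det_eq_one (det_coprimeBlock h₀ hαβ hb))).trans ?_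
  rw [hE, fromBlocks_mul_coprimeBlock hαβ hb, secA_cons_merge]
  exact unimodularEquiv_fromBlocks_one_zero _ _

theorem unimodularEquiv_secA_dsumIP (n : ℕ) (B W : Fin (n + 1) → Matrix (Fin m) (Fin m) ℂ[X])
    (hreg : ∀ i, (B i).det ≠ 0) (hcomm : ∀ i j, Commute (B i) (B j))
    (hcop : Pairwise fun i j => IsRightCoprime (B i) (B j)) :
    UnimodularEquiv (secA B W) (dsumIP (n + 1) m (secularPoly B W)) := by
  induction n with
  | zero =>
    rw [secA_fin_one, secularPoly_fin_one]
    exact .refl _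
  | succ n ih =>
    obtain ⟨b₀, b₁, B, rfl⟩ : ∃ b₀ b₁ B', B = Fin.cons b₀ (Fin.cons b₁ B') :=
      ⟨_, _, _, by rw [Fin.cons_self_tail, Fin.cons_self_tail]⟩
    obtain ⟨w₀, w₁, W, rfl⟩ : ∃ w₀ w₁ W', W = Fin.cons w₀ (Fin.cons w₁ W') :=
      ⟨_, _, _, by rw [Fin.cons_self_tail, Fin.cons_self_tail]⟩
    simp only [Fin.forall_fin_succ, pairwise_fin_succ_iff, Fin.cons_zero, Fin.cons_succ]
      at hreg hcomm hcop
    obtain ⟨hreg₀, hreg₁, hregB⟩ := hreg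
    obtain ⟨⟨-, hb, hb₀B⟩, ⟨-, -, hb₁B⟩, hBb⟩ := hcomm
    obtain ⟨⟨-, hB0⟩, ⟨h01, h0B⟩, hB1, h1B, hBB⟩ := hcop
    rw [secularPoly_cons_cons _ _ _ _ _ _ hb, dsumIP_add_two]
    refine (unimodularEquiv_secA_cons_cons _ _ _ _ _ _ hreg₀ h01 hb).trans
      ((ih _ _ ?_ ?_ ?_).fromBlocks_one.submatrix _) <;> simp only [Fin.forall_fin_succ, pairwise_fin_succ_iff, Fin.cons_zero, Fin.cons_succ,
        Commute.refl, true_and]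
    · exact ⟨by rw [det_mul]; exact mul_ne_zero hreg₁ hreg₀, hregB⟩
    · exact ⟨fun i => (hb₁B i).mul_left (hb₀B i),
        fun i => ⟨(hBb i).2.1.mul_right (hBb i).1, (hBb i).2.2⟩⟩
    · exact ⟨fun i => (hB0 i).mul_right (hB1 i) (hBb i).2.1,
        fun i => (h0B i).mul_left (h1B i) (hb₁B i), hBB⟩

end Secular

theorem secular_ellification_general (m q : ℕ)
    (P : Matrix (Fin m) (Fin m) (Polynomial ℂ))
    (B W : Fin q → Matrix (Fin m) (Fin m) (Polynomial ℂ))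
    (hreg : ∀ i, (B i).det ≠ 0)
    (hcomm : ∀ i j, B i * B j = B j * B i)
    (hcop : ∀ i j, i ≠ j → ∃ α β : Matrix (Fin m) (Fin m) (Polynomial ℂ),
      B i * α + B j * β = 1)
    (hP : P = mpProd B + ∑ i, W i * mpProdErase B i) :
    ∃ E F : Matrix (Fin q × Fin m) (Fin q × Fin m) (Polynomial ℂ),
      Unimodular E ∧ Unimodular F ∧ E * secA B W * F = dsumIP q m P := by
  cases q with
  | zero => exact ⟨1, 1, unimodular_of_det_eq_one det_one, unimodular_of_det_eq_one det_one,
      Subsingleton.elim _ _⟩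
  | succ n => exact hP ▸ unimodularEquiv_secA_dsumIP n B W hreg hcomm hcop

/-- the secular ℓ-ification theorem: if the `Bᵢ` are regular,
pairwise commuting and pairwise right coprime, and
`P = ∏ᵢ Bᵢ + Σᵢ Wᵢ Cᵢ`, then `A(x)` is (unimodularly) equivalent to
`I_{m(q−1)} ⊕ P(x)`. -/
theorem secular_ellification (m q : ℕ) (hq : 0 < q)
    (P : Matrix (Fin m) (Fin m) (Polynomial ℂ))
    (B W : Fin q → Matrix (Fin m) (Fin m) (Polynomial ℂ))
    (hreg : ∀ i, (B i).det ≠ 0)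
    (hcomm : ∀ i j, B i * B j = B j * B i)
    (hcop : ∀ i j, i ≠ j → ∃ α β : Matrix (Fin m) (Fin m) (Polynomial ℂ),
      B i * α + B j * β = 1)
    (hP : P = mpProd B + ∑ i, W i * mpProdErase B i) :
    ∃ E F : Matrix (Fin q × Fin m) (Fin q × Fin m) (Polynomial ℂ),
      Unimodular E ∧ Unimodular F ∧ E * secA B W * F = dsumIP q m P :=
  secular_ellification_general m q P B W hreg hcomm hcop hP
end

section
/- Let A(λ)v_A = 0 with v_A = (v₁ᵗ,…,v_qᵗ)ᵗ ≠ 0, where A(x) = diag(B₁(x),…,B_q(x)) + (e⊗I_m)[W₁(x),…,W_q(x)] is the secular ℓ-ification of P(x), det P(λ) = 0 and det Bᵢ(λ) ≠ 0 for all i. Then v := −(∏ᵢ Bᵢ(λ)^{-1}) Σⱼ Wⱼ(λ)vⱼ is nonzero and P(λ)v = 0. -/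
open Polynomial Matrix

private lemma prod_erase_of_comm {M : Type*} [Monoid M] {ι : Type*} [DecidableEq ι]
    (f : ι → M) (l : List ι) (i : ι) (hi : i ∈ l)
    (hc : ∀ j ∈ l, f i * f j = f j * f i) :
    f i * ((l.erase i).map f).prod = (l.map f).prod := by
  induction l with
  | nil => simp at hi
  | cons a t ih =>
    by_cases h : a = i
    · subst h; simp
    · rw [List.erase_cons_tail (by simpa using h)]
      simp only [List.map_cons, List.prod_cons]
      rw [← mul_assoc, hc a (by simp), mul_assoc,
        ih ((List.mem_cons.mp hi).resolve_left fun e => h e.symm)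
          (fun j hj => hc j (by simp [hj]))]

/-- right eigenvectors of the secular ℓ-ification give right
eigenvectors of `P`: if `A(λ)v_A = 0` with `v_A ≠ 0`, `det P(λ) = 0` and all
`Bᵢ(λ)` invertible, then `v = −(∏ᵢ Bᵢ(λ))⁻¹ Σⱼ Wⱼ(λ)vⱼ` is nonzero and
`P(λ)v = 0`. -/
theorem secular_right_eigenvector (m q : ℕ) (hq : 0 < q)
    (P : Matrix (Fin m) (Fin m) (Polynomial ℂ))
    (B W : Fin q → Matrix (Fin m) (Fin m) (Polynomial ℂ))
    (hreg : ∀ i, (B i).det ≠ 0)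
    (hcomm : ∀ i j, B i * B j = B j * B i)
    (hcop : ∀ i j, i ≠ j → ∃ α β : Matrix (Fin m) (Fin m) (Polynomial ℂ),
      B i * α + B j * β = 1)
    (hP : P = mpProd B + ∑ i, W i * mpProdErase B i)
    (lam : ℂ)
    (hPlam : (P.map (Polynomial.eval lam)).det = 0)
    (hBlam : ∀ i, ((B i).map (Polynomial.eval lam)).det ≠ 0)
    (vA : Fin q × Fin m → ℂ) (hvA : vA ≠ 0)
    (heig : (secA B W).map (Polynomial.eval lam) *ᵥ vA = 0) :
    -(((mpProd B).map (Polynomial.eval lam))⁻¹ *ᵥ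
        ∑ j, ((W j).map (Polynomial.eval lam)) *ᵥ fun a => vA (j, a)) ≠ 0 ∧
    (P.map (Polynomial.eval lam)) *ᵥ
      -(((mpProd B).map (Polynomial.eval lam))⁻¹ *ᵥ
          ∑ j, ((W j).map (Polynomial.eval lam)) *ᵥ fun a => vA (j, a)) = 0 := by
  classical
  set φ : Matrix (Fin m) (Fin m) (Polynomial ℂ) →+* Matrix (Fin m) (Fin m) ℂ :=
    (Polynomial.evalRingHom lam).mapMatrix with hφ
  have hφ_apply : ∀ M : Matrix (Fin m) (Fin m) (Polynomial ℂ),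
      φ M = M.map (Polynomial.eval lam) := fun M => rfl
  set Bl : Fin q → Matrix (Fin m) (Fin m) ℂ := fun i => (B i).map (Polynomial.eval lam)
    with hBl
  set Wl : Fin q → Matrix (Fin m) (Fin m) ℂ := fun i => (W i).map (Polynomial.eval lam)
    with hWl
  set s : Fin m → ℂ := ∑ j, Wl j *ᵥ fun a => vA (j, a) with hs
  set Prl : Matrix (Fin m) (Fin m) ℂ := (mpProd B).map (Polynomial.eval lam) with hPi
  set Cl : Fin q → Matrix (Fin m) (Fin m) ℂ :=
    fun i => (mpProdErase B i).map (Polynomial.eval lam) with hCl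
  -- the evaluated full product as a list product
  have hPi_list : Prl = ((List.finRange q).map (fun i => Bl i)).prod := by
    rw [hPi, mpProd, ← hφ_apply, map_list_prod, List.map_map]
    rfl
  have hCl_list : ∀ i, Cl i = (((List.finRange q).erase i).map (fun j => Bl j)).prod := by
    intro i
    rw [hCl]; dsimp only
    rw [mpProdErase, ← hφ_apply, map_list_prod, List.map_map]
    rfl
  -- determinants
  have hdet_list : ∀ l : List (Fin q), (∀ j ∈ l, (j : Fin q) ∈ l) →
      ((l.map (fun j => Bl j)).prod).det ≠ 0 := by
    intro l _
    rw [show (List.map (fun j => Bl j) l).prod.det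
        = Matrix.detMonoidHom (List.map (fun j => Bl j) l).prod from rfl,
      MonoidHom.map_list_prod, List.map_map]
    refine List.prod_ne_zero ?_
    intro hx
    simp only [List.mem_map, Function.comp] at hx
    obtain ⟨j, _, hj⟩ := hx
    exact hBlam j hj
  have hPidet : Prl.det ≠ 0 := by rw [hPi_list]; exact hdet_list _ (fun j hj => hj)
  have hCldet : ∀ i, (Cl i).det ≠ 0 := by
    intro i; rw [hCl_list i]; exact hdet_list _ (fun j hj => hj)
  -- commutation of evaluated blocks
  have hcomm' : ∀ i j, Bl i * Bl j = Bl j * Bl i := by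
    intro i j
    have := congrArg φ (hcomm i j)
    rw [_root_.map_mul, _root_.map_mul] at this
    exact this
  -- key factorization  Bl i * Cl i = Prl
  have hfact : ∀ i, Bl i * Cl i = Prl := by
    intro i
    rw [hCl_list i, hPi_list]
    exact prod_erase_of_comm _ _ i (List.mem_finRange i) (fun j _ => hcomm' i j)
  -- evaluated eigenvector equation, blockwise
  have hblock : ∀ i : Fin q, Bl i *ᵥ (fun a => vA (i, a)) = -s := by
    intro i
    funext a
    have h0 := congrFun heig (i, a)
    simp only [Matrix.mulVec, dotProduct, secA, Matrix.map_apply, Matrix.of_apply,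
      Pi.zero_apply, Fintype.sum_prod_type] at h0
    have h0' : (∑ j : Fin q, ∑ b : Fin m,
        ((if i = j then Bl i a b else 0) + Wl j a b) * vA (j, b)) = 0 := by
      convert h0 using 2 with j
      refine Finset.sum_congr rfl fun b _ => ?_
      by_cases h : i = j <;> simp [h, hBl, hWl, Matrix.map_apply]
    simp only [add_mul, Finset.sum_add_distrib, ite_mul, zero_mul,
      Finset.sum_ite_irrel, Finset.sum_const_zero] at h0'
    rw [Finset.sum_ite_eq, if_pos (Finset.mem_univ i)] at h0'
    have : (Bl i *ᵥ fun a => vA (i, a)) a + s a = 0 := by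
      rw [hs]
      simpa [Matrix.mulVec, dotProduct, Finset.sum_apply] using h0'
    simpa [eq_neg_iff_add_eq_zero] using this
  -- inverse relations
  have hPiinv : Prl * Prl⁻¹ = 1 := Matrix.mul_nonsing_inv _ (isUnit_iff_ne_zero.mpr hPidet)
  have hPiinv' : Prl⁻¹ * Prl = 1 := Matrix.nonsing_inv_mul _ (isUnit_iff_ne_zero.mpr hPidet)
  have hClPi : ∀ i, Cl i * Prl⁻¹ = (Bl i)⁻¹ := by
    intro i
    rw [← hfact i, Matrix.mul_inv_rev, ← mul_assoc,
      Matrix.mul_nonsing_inv _ (isUnit_iff_ne_zero.mpr (hCldet i)), one_mul]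
  have hBinvs : ∀ i, (Bl i)⁻¹ *ᵥ s = -(fun a => vA (i, a)) := by
    intro i
    have := congrArg (fun w => (Bl i)⁻¹ *ᵥ w) (hblock i)
    simp only [Matrix.mulVec_mulVec, Matrix.mulVec_neg] at this
    rw [← neg_eq_iff_eq_neg, ← this,
      Matrix.nonsing_inv_mul _ (isUnit_iff_ne_zero.mpr (hBlam i)), Matrix.one_mulVec]
  -- evaluated P
  have hPl : P.map (Polynomial.eval lam) = Prl + ∑ i, Wl i * Cl i := by
    rw [hP, ← hφ_apply, map_add, map_sum]
    simp only [_root_.map_mul]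
    rfl
  -- the candidate eigenvector
  set v : Fin m → ℂ := -(Prl⁻¹ *ᵥ s) with hv
  constructor
  · -- v ≠ 0
    intro hv0
    have hs0 : s = 0 := by
      have : Prl *ᵥ (Prl⁻¹ *ᵥ s) = 0 := by
        rw [show Prl⁻¹ *ᵥ s = 0 by simpa [hv] using hv0, Matrix.mulVec_zero]
      rwa [Matrix.mulVec_mulVec, hPiinv, Matrix.one_mulVec] at this
    apply hvA
    funext p
    obtain ⟨i, a⟩ := p
    have := congrFun (hBinvs i) a
    simp only [hs0, Matrix.mulVec_zero, Pi.zero_apply, Pi.neg_apply] at this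
    simpa using this.symm
  · -- P(λ) v = 0
    have hkey : (P.map (Polynomial.eval lam)) * Prl⁻¹ = 1 + ∑ i, Wl i * (Bl i)⁻¹ := by
      rw [hPl, add_mul, hPiinv, Finset.sum_mul]
      congr 1
      refine Finset.sum_congr rfl fun i _ => ?_
      rw [mul_assoc, hClPi i]
    calc (P.map (Polynomial.eval lam)) *ᵥ v
        = -(((P.map (Polynomial.eval lam)) * Prl⁻¹) *ᵥ s) := by
          rw [hv, Matrix.mulVec_neg, Matrix.mulVec_mulVec]
      _ = -(s + ∑ i, (Wl i * (Bl i)⁻¹) *ᵥ s) := by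
          rw [hkey, Matrix.add_mulVec, Matrix.one_mulVec]
          congr 1
          congr 1
          exact map_sum (Matrix.mulVec.addMonoidHomLeft s)
            (fun i => Wl i * (Bl i)⁻¹) Finset.univ
      _ = 0 := by
          have : ∀ i, (Wl i * (Bl i)⁻¹) *ᵥ s = -(Wl i *ᵥ fun a => vA (i, a)) := by
            intro i
            rw [← Matrix.mulVec_mulVec, hBinvs i, Matrix.mulVec_neg]
          simp only [this, Finset.sum_neg_distrib]
          rw [← hs]
          simp
end

section
/- With A(x) the secular ℓ-ification of P(x), λ such that det P(λ) = 0 and det Bᵢ(λ) ≠ 0 for all i: if v ∈ ℂ^m is nonzero with P(λ)v = 0, then the block vector v_A with blocks vᵢ = (∏_{j≠i} Bⱼ(λ))v is nonzero and satisfies A(λ)v_A = 0. -/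
/-!
Since the `Bⱼ` commute, `Bᵢ Cᵢ = ∏ⱼ Bⱼ` for every `i`, where `Cᵢ = ∏_{j≠i} Bⱼ`; hence
`P = Bᵢ Cᵢ + Σⱼ Wⱼ Cⱼ`, and block `i` of `A(λ) v_A` is exactly `P(λ) v = 0`. The vector `v_A` is
nonzero because its first block is `C₁(λ) v` with `C₁(λ)` invertible.
-/

open Polynomial Matrix

theorem List.prod_map_erase_of_commute {α M : Type*} [DecidableEq α] [Monoid M] {f : α → M}
    (hf : ∀ a b, Commute (f a) (f b)) {l : List α} {a : α} (ha : a ∈ l) :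
    f a * ((l.erase a).map f).prod = (l.map f).prod := by
  simpa using ((List.perm_cons_erase ha).map f).symm.prod_eq'
    (List.pairwise_map.mpr (List.pairwise_of_forall hf))

section SecularForm

variable {q m : ℕ} {R : Type*} [Semiring R]

theorem mul_mpProdErase (B : Fin q → Matrix (Fin m) (Fin m) ℂ[X])
    (hcomm : ∀ i j, B i * B j = B j * B i) (i : Fin q) :
    B i * mpProdErase B i = mpProd B :=
  List.prod_map_erase_of_commute (fun a b => hcomm a b) (List.mem_finRange i)

theorem isUnit_map_mpProdErase (f : ℂ[X] →+* R) (B : Fin q → Matrix (Fin m) (Fin m) ℂ[X])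
    (hB : ∀ j, IsUnit ((B j).map f)) (i : Fin q) :
    IsUnit ((mpProdErase B i).map f) := by
  rw [mpProdErase, ← RingHom.mapMatrix_apply, map_list_prod, List.map_map]
  exact List.prod_isUnit fun _ hM => by
    obtain ⟨j, -, rfl⟩ := List.mem_map.mp hM
    exact hB j

theorem secA_map_mulVec_apply (f : ℂ[X] →+* R) (B W : Fin q → Matrix (Fin m) (Fin m) ℂ[X])
    (x : Fin q × Fin m → R) (i : Fin q) (k : Fin m) :
    ((secA B W).map f *ᵥ x) (i, k) =
      ((B i).map f *ᵥ (fun l => x (i, l)) + ∑ j, (W j).map f *ᵥ (fun l => x (j, l))) k := by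
  simp only [secA, mulVec, dotProduct, map_apply, of_apply, map_add, apply_ite f, map_zero,
    add_mul, ite_mul, zero_mul, Finset.sum_add_distrib, Fintype.sum_prod_type, Finset.sum_ite_irrel,
    Finset.sum_const_zero, Finset.sum_ite_eq, Finset.mem_univ, if_true, Pi.add_apply,
    Finset.sum_apply]

theorem secA_map_mulVec_blocks (f : ℂ[X] →+* R) (B W C : Fin q → Matrix (Fin m) (Fin m) ℂ[X])
    (u : Fin m → R) (i : Fin q) (k : Fin m) :
    ((secA B W).map f *ᵥ fun p => ((C p.1).map f *ᵥ u) p.2) (i, k) =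
      ((B i * C i + ∑ j, W j * C j).map f *ᵥ u) k := by
  rw [secA_map_mulVec_apply]
  simp only [← RingHom.mapMatrix_apply, map_add, map_sum, map_mul,
    add_mulVec, sum_mulVec, mulVec_mulVec]

end SecularForm

theorem secular_right_eigenvector_converse_general (m q : ℕ) (hq : 0 < q)
    (P : Matrix (Fin m) (Fin m) (Polynomial ℂ))
    (B W : Fin q → Matrix (Fin m) (Fin m) (Polynomial ℂ))
    (hcomm : ∀ i j, B i * B j = B j * B i)
    (hP : P = mpProd B + ∑ i, W i * mpProdErase B i)
    (lam : ℂ)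
    (hBlam : ∀ i, ((B i).map (Polynomial.eval lam)).det ≠ 0)
    (v : Fin m → ℂ) (hv : v ≠ 0)
    (heig : (P.map (Polynomial.eval lam)) *ᵥ v = 0) :
    (fun p : Fin q × Fin m =>
      (((mpProdErase B p.1).map (Polynomial.eval lam)) *ᵥ v) p.2) ≠ 0 ∧
    (secA B W).map (Polynomial.eval lam) *ᵥ
      (fun p : Fin q × Fin m =>
        (((mpProdErase B p.1).map (Polynomial.eval lam)) *ᵥ v) p.2) = 0 := by
  rw [← coe_evalRingHom] at hBlam heig ⊢
  constructor
  · intro hblocks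
    let i₀ : Fin q := ⟨0, hq⟩
    have hC : IsUnit ((mpProdErase B i₀).map (evalRingHom lam)) :=
      isUnit_map_mpProdErase _ B (fun j => (isUnit_iff_isUnit_det _).mpr (hBlam j).isUnit) i₀
    refine hv (mulVec_injective_iff_isUnit.mpr hC ?_)
    rw [mulVec_zero]
    exact funext fun k => congrFun hblocks (i₀, k)
  · funext ⟨i, k⟩
    have hPi : B i * mpProdErase B i + ∑ j, W j * mpProdErase B j = P := by
      rw [hP, mul_mpProdErase B hcomm i]
    rw [secA_map_mulVec_blocks, hPi, heig]
    rfl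

/-- right eigenvectors of `P` give right eigenvectors of the
secular ℓ-ification: if `P(λ)v = 0` with `v ≠ 0` and all `Bᵢ(λ)` invertible,
then `v_A` with blocks `vᵢ = (∏_{j≠i} Bⱼ(λ)) v` is nonzero and
`A(λ)v_A = 0`. -/
theorem secular_right_eigenvector_converse (m q : ℕ) (hq : 0 < q)
    (P : Matrix (Fin m) (Fin m) (Polynomial ℂ))
    (B W : Fin q → Matrix (Fin m) (Fin m) (Polynomial ℂ))
    (hreg : ∀ i, (B i).det ≠ 0)
    (hcomm : ∀ i j, B i * B j = B j * B i)
    (hcop : ∀ i j, i ≠ j → ∃ α β : Matrix (Fin m) (Fin m) (Polynomial ℂ),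
      B i * α + B j * β = 1)
    (hP : P = mpProd B + ∑ i, W i * mpProdErase B i)
    (lam : ℂ)
    (hPlam : (P.map (Polynomial.eval lam)).det = 0)
    (hBlam : ∀ i, ((B i).map (Polynomial.eval lam)).det ≠ 0)
    (v : Fin m → ℂ) (hv : v ≠ 0)
    (heig : (P.map (Polynomial.eval lam)) *ᵥ v = 0) :
    (fun p : Fin q × Fin m =>
      (((mpProdErase B p.1).map (Polynomial.eval lam)) *ᵥ v) p.2) ≠ 0 ∧
    (secA B W).map (Polynomial.eval lam) *ᵥ
      (fun p : Fin q × Fin m =>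
        (((mpProdErase B p.1).map (Polynomial.eval lam)) *ᵥ v) p.2) = 0 :=
  secular_right_eigenvector_converse_general m q hq P B W hcomm hP lam hBlam v hv heig
end

section
/- With A(x) the secular ℓ-ification of P(x), λ such that det P(λ) = 0 and det Bᵢ(λ) ≠ 0 for all i: if u_Aᵗ = (u₁ᵗ,…,u_qᵗ) is a nonzero left null vector of A(λ), then u := Σᵢ uᵢ is nonzero and uᵗP(λ) = 0; conversely, if uᵗP(λ) = 0 with u ≠ 0 then u_A defined by uᵢᵗ = −uᵗWᵢ(λ)Bᵢ(λ)^{-1} is a nonzero left null vector of A(λ). -/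
open Polynomial Matrix

lemma prod_eq_mul_erase {q m : ℕ} (B : Fin q → Matrix (Fin m) (Fin m) (Polynomial ℂ))
    (hcomm : ∀ i j, B i * B j = B j * B i) (i : Fin q) :
    mpProd B = B i * mpProdErase B i := by
  unfold mpProd mpProdErase
  have hperm : List.Perm ((List.finRange q).map B) ((i :: (List.finRange q).erase i).map B) :=
    (List.perm_cons_erase (List.mem_finRange i)).map B
  have hpair : ((List.finRange q).map B).Pairwise Commute := by
    rw [List.pairwise_map]
    exact List.pairwise_of_forall fun a b => hcomm a b
  rw [hperm.prod_eq' hpair, List.map_cons, List.prod_cons]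

lemma vecMul_finset_sum {n k : ℕ} (v : Fin n → ℂ) (s : Finset (Fin k))
    (M : Fin k → Matrix (Fin n) (Fin n) ℂ) :
    v ᵥ* (∑ i ∈ s, M i) = ∑ i ∈ s, v ᵥ* M i := by
  funext b
  simp [Matrix.vecMul, dotProduct, Matrix.sum_apply, Finset.mul_sum]
  rw [Finset.sum_comm]

lemma finset_sum_vecMul {n k : ℕ} (w : Fin k → Fin n → ℂ) (s : Finset (Fin k))
    (M : Matrix (Fin n) (Fin n) ℂ) :
    (∑ i ∈ s, w i) ᵥ* M = ∑ i ∈ s, w i ᵥ* M := by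
  funext b
  simp [Matrix.vecMul, dotProduct, Finset.sum_apply, Finset.sum_mul]
  rw [Finset.sum_comm]

lemma vecMul_right_cancel {n : ℕ} {M : Matrix (Fin n) (Fin n) ℂ} (h : IsUnit M.det)
    {v : Fin n → ℂ} (hv : v ᵥ* M = 0) : v = 0 := by
  have := congrArg (fun x => x ᵥ* M⁻¹) hv
  simpa [Matrix.vecMul_vecMul, Matrix.mul_nonsing_inv M h] using this


/-- left eigenvectors of the secular ℓ-ification correspond to
left eigenvectors of `P`: if `u_Aᵗ A(λ) = 0` with `u_A ≠ 0` then
`u = Σᵢ uᵢ ≠ 0` and `uᵗ P(λ) = 0`; conversely, if `uᵗ P(λ) = 0` with `u ≠ 0`,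
then `u_A` with blocks `uᵢᵗ = −uᵗ Wᵢ(λ) Bᵢ(λ)⁻¹` is a nonzero left null
vector of `A(λ)`. -/
theorem secular_left_eigenvector (m q : ℕ) (hq : 0 < q)
    (P : Matrix (Fin m) (Fin m) (Polynomial ℂ))
    (B W : Fin q → Matrix (Fin m) (Fin m) (Polynomial ℂ))
    (hreg : ∀ i, (B i).det ≠ 0)
    (hcomm : ∀ i j, B i * B j = B j * B i)
    (hcop : ∀ i j, i ≠ j → ∃ α β : Matrix (Fin m) (Fin m) (Polynomial ℂ),
      B i * α + B j * β = 1)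
    (hP : P = mpProd B + ∑ i, W i * mpProdErase B i)
    (lam : ℂ)
    (hPlam : (P.map (Polynomial.eval lam)).det = 0)
    (hBlam : ∀ i, ((B i).map (Polynomial.eval lam)).det ≠ 0) :
    (∀ uA : Fin q × Fin m → ℂ, uA ≠ 0 →
      uA ᵥ* ((secA B W).map (Polynomial.eval lam)) = 0 →
      (fun a : Fin m => ∑ i, uA (i, a)) ≠ 0 ∧
      (fun a : Fin m => ∑ i, uA (i, a)) ᵥ* (P.map (Polynomial.eval lam)) = 0) ∧
    (∀ u : Fin m → ℂ, u ≠ 0 →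
      u ᵥ* (P.map (Polynomial.eval lam)) = 0 →
      (fun p : Fin q × Fin m =>
        (-(u ᵥ* (((W p.1).map (Polynomial.eval lam)) *
            (((B p.1).map (Polynomial.eval lam)))⁻¹))) p.2) ≠ 0 ∧
      (fun p : Fin q × Fin m =>
        (-(u ᵥ* (((W p.1).map (Polynomial.eval lam)) *
            (((B p.1).map (Polynomial.eval lam)))⁻¹))) p.2)
        ᵥ* ((secA B W).map (Polynomial.eval lam)) = 0) := by
  classical
  have hmul : ∀ (M N : Matrix (Fin m) (Fin m) (Polynomial ℂ)),
      (M * N).map (Polynomial.eval lam) =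
        M.map (Polynomial.eval lam) * N.map (Polynomial.eval lam) := fun M N =>
    Matrix.map_mul (f := Polynomial.evalRingHom lam)
  have hBinv : ∀ i, IsUnit (((B i).map (Polynomial.eval lam)).det) :=
    fun i => isUnit_iff_ne_zero.mpr (hBlam i)
  have hBC : ∀ i, ((B i).map (Polynomial.eval lam)) * ((mpProdErase B i).map (Polynomial.eval lam))
      = (mpProd B).map (Polynomial.eval lam) := by
    intro i
    rw [← hmul, prod_eq_mul_erase B hcomm i]
  have hPl : P.map (Polynomial.eval lam) = (mpProd B).map (Polynomial.eval lam) +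
      ∑ i, ((W i).map (Polynomial.eval lam)) * ((mpProdErase B i).map (Polynomial.eval lam)) := by
    rw [hP]
    have h : (mpProd B + ∑ i, W i * mpProdErase B i).map (Polynomial.eval lam) =
        (mpProd B).map (Polynomial.eval lam) +
          (∑ i, W i * mpProdErase B i).map (Polynomial.eval lam) :=
      map_add ((Polynomial.evalRingHom lam).mapMatrix) _ _
    have h2 : (∑ i, W i * mpProdErase B i).map (Polynomial.eval lam) =
        ∑ i, (W i * mpProdErase B i).map (Polynomial.eval lam) :=
      map_sum ((Polynomial.evalRingHom lam).mapMatrix) _ _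
    rw [h, h2]
    congr 1
    exact Finset.sum_congr rfl fun i _ => hmul _ _
  have hPrlist : (mpProd B).map (Polynomial.eval lam) =
      ((List.finRange q).map fun i => (B i).map (Polynomial.eval lam)).prod := by
    show ((Polynomial.evalRingHom lam).mapMatrix) (((List.finRange q).map B).prod) = _
    rw [map_list_prod, List.map_map]
    rfl
  have hPrdet : IsUnit ((mpProd B).map (Polynomial.eval lam)).det := by
    rw [isUnit_iff_ne_zero, hPrlist]
    have hdet := map_list_prod (Matrix.detMonoidHom)
      ((List.finRange q).map fun i => (B i).map (Polynomial.eval lam))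
    simp only [Matrix.coe_detMonoidHom] at hdet
    rw [hdet, List.map_map]
    apply List.prod_ne_zero
    intro hmem
    obtain ⟨i, -, hi⟩ := List.mem_map.mp hmem
    exact hBlam i hi
  have hrow : ∀ (v : Fin q × Fin m → ℂ) (j : Fin q) (b : Fin m),
      (v ᵥ* ((secA B W).map (Polynomial.eval lam))) (j, b) =
        ((fun a => v (j, a)) ᵥ* ((B j).map (Polynomial.eval lam))) b +
          ((fun a => ∑ i, v (i, a)) ᵥ* ((W j).map (Polynomial.eval lam))) b := by
    intro v j b
    simp only [Matrix.vecMul, dotProduct, Matrix.map_apply, secA, Matrix.of_apply,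
      Polynomial.eval_add, apply_ite (Polynomial.eval lam), Polynomial.eval_zero,
      mul_add, mul_ite, mul_zero, Fintype.sum_prod_type, Finset.sum_add_distrib]
    congr 1
    · have hz : ∀ i ∈ Finset.univ, i ≠ j →
          (∑ a, if i = j then v (i, a) * Polynomial.eval lam (B i a b) else 0) = 0 := by
        intro i _ hij; simp [hij]
      rw [Finset.sum_eq_single_of_mem j (Finset.mem_univ j) hz]
      simp
    · rw [Finset.sum_comm]
      exact Finset.sum_congr rfl fun a _ => (Finset.sum_mul _ _ _).symm
  constructor
  · -- forward direction
    intro uA hne hA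
    have hkey : ∀ j, (fun a => uA (j, a)) ᵥ* ((B j).map (Polynomial.eval lam)) =
        -((fun a : Fin m => ∑ i, uA (i, a)) ᵥ* ((W j).map (Polynomial.eval lam))) := by
      intro j
      funext b
      have h0 := congrFun hA (j, b)
      rw [hrow uA j b] at h0
      simp only [Pi.zero_apply] at h0
      rw [Pi.neg_apply]
      exact eq_neg_of_add_eq_zero_left h0
    have hu0 : (fun a : Fin m => ∑ i, uA (i, a)) ᵥ* (P.map (Polynomial.eval lam)) = 0 := by
      rw [hPl, Matrix.vecMul_add, vecMul_finset_sum]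
      have hterm : ∀ i ∈ Finset.univ,
          (fun a : Fin m => ∑ k, uA (k, a)) ᵥ*
            (((W i).map (Polynomial.eval lam)) * ((mpProdErase B i).map (Polynomial.eval lam))) =
          -((fun a => uA (i, a)) ᵥ* ((mpProd B).map (Polynomial.eval lam))) := by
        intro i _
        rw [← Matrix.vecMul_vecMul, ← neg_neg ((fun a : Fin m => ∑ k, uA (k, a)) ᵥ* _),
          ← hkey i, Matrix.neg_vecMul, Matrix.vecMul_vecMul, hBC i]
      rw [Finset.sum_congr rfl hterm, Finset.sum_neg_distrib, ← finset_sum_vecMul]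
      have hsw : (∑ i, fun a => uA (i, a)) = (fun a : Fin m => ∑ i, uA (i, a)) := by
        funext a; simp [Finset.sum_apply]
      rw [hsw, add_neg_cancel]
    refine ⟨?_, hu0⟩
    intro h0
    apply hne
    funext p
    obtain ⟨i, a⟩ := p
    have hwi : (fun a => uA (i, a)) = 0 := by
      apply vecMul_right_cancel (hBinv i)
      rw [hkey i, h0, Matrix.zero_vecMul, neg_zero]
    exact congrFun hwi a
  · -- converse direction
    intro u hune hu0
    have hCl : ∀ i, (mpProdErase B i).map (Polynomial.eval lam) =
        (((B i).map (Polynomial.eval lam)))⁻¹ * ((mpProd B).map (Polynomial.eval lam)) := by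
      intro i
      calc (mpProdErase B i).map (Polynomial.eval lam)
          = ((((B i).map (Polynomial.eval lam)))⁻¹ * ((B i).map (Polynomial.eval lam))) *
            (mpProdErase B i).map (Polynomial.eval lam) := by
            rw [Matrix.nonsing_inv_mul _ (hBinv i), one_mul]
        _ = (((B i).map (Polynomial.eval lam)))⁻¹ * ((mpProd B).map (Polynomial.eval lam)) := by
            rw [mul_assoc, hBC i]
    set w : Fin q → Fin m → ℂ := fun i =>
      -(u ᵥ* (((W i).map (Polynomial.eval lam)) * (((B i).map (Polynomial.eval lam)))⁻¹)) with hw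
    have hsum : (∑ i, w i) = u := by
      have h1 : (u - ∑ i, w i) ᵥ* ((mpProd B).map (Polynomial.eval lam)) = 0 := by
        have h2 : u ᵥ* (P.map (Polynomial.eval lam)) =
            (u - ∑ i, w i) ᵥ* ((mpProd B).map (Polynomial.eval lam)) := by
          rw [hPl, Matrix.vecMul_add, vecMul_finset_sum]
          have h3 : ∀ i ∈ Finset.univ, u ᵥ*
              (((W i).map (Polynomial.eval lam)) * ((mpProdErase B i).map (Polynomial.eval lam))) =
              -(w i ᵥ* ((mpProd B).map (Polynomial.eval lam))) := by
            intro i _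
            rw [hw]
            simp only
            rw [Matrix.neg_vecMul, neg_neg, Matrix.vecMul_vecMul, mul_assoc, ← hCl i]
          rw [Finset.sum_congr rfl h3, Finset.sum_neg_distrib, ← finset_sum_vecMul, ← sub_eq_add_neg, ← Matrix.sub_vecMul]
        rw [← h2]; exact hu0
      have h4 := vecMul_right_cancel hPrdet h1
      have h5 := sub_eq_zero.mp h4
      exact h5.symm
    have hwB : ∀ j, w j ᵥ* ((B j).map (Polynomial.eval lam)) =
        -(u ᵥ* ((W j).map (Polynomial.eval lam))) := by
      intro j
      rw [hw]
      simp only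
      rw [Matrix.neg_vecMul, Matrix.vecMul_vecMul, mul_assoc,
        Matrix.nonsing_inv_mul _ (hBinv j), mul_one]
    constructor
    · intro h0
      apply hune
      have hwi : ∀ i a, w i a = 0 := fun i a => congrFun h0 (i, a)
      rw [← hsum]
      funext a
      rw [Finset.sum_apply]
      simp [hwi]
    · funext pb
      obtain ⟨j, b⟩ := pb
      rw [Pi.zero_apply]
      have hr := hrow (fun p : Fin q × Fin m =>
        (-(u ᵥ* (((W p.1).map (Polynomial.eval lam)) *
            (((B p.1).map (Polynomial.eval lam)))⁻¹))) p.2) j b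
      rw [hr]
      have e1 : (fun a => (fun p : Fin q × Fin m =>
          (-(u ᵥ* (((W p.1).map (Polynomial.eval lam)) *
              (((B p.1).map (Polynomial.eval lam)))⁻¹))) p.2) (j, a)) = w j := rfl
      have e2 : (fun a : Fin m => ∑ i, (fun p : Fin q × Fin m =>
          (-(u ᵥ* (((W p.1).map (Polynomial.eval lam)) *
              (((B p.1).map (Polynomial.eval lam)))⁻¹))) p.2) (i, a)) = u := by
        funext a
        rw [show (∑ i, (fun p : Fin q × Fin m =>
          (-(u ᵥ* (((W p.1).map (Polynomial.eval lam)) *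
              (((B p.1).map (Polynomial.eval lam)))⁻¹))) p.2) (i, a)) = ∑ i, w i a from rfl,
          ← Finset.sum_apply, hsum]
      rw [e1, e2, hwB j, Pi.neg_apply]
      ring
end

section
/- Let P(x) be a monic m×m matrix polynomial of degree n and β₁,…,βₙ ∈ ℂ pairwise distinct. With Wᵢ = P(βᵢ)/∏_{j≠i}(βᵢ − βⱼ), one has the decomposition P(x) = ∏ᵢ(x−βᵢ)I_m + Σᵢ Wᵢ ∏_{j≠i}(x−βⱼ), and consequently det P(x) = det(xI − D + (e⊗I_m)[W₁,…,Wₙ]) where D = diag(β₁I_m,…,βₙI_m). -/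
/-!
Entrywise, `P a c - δ_ac ∏ᵢ (X - βᵢ)` has degree `< n`, so it is its own Lagrange interpolant at
the nodes `βᵢ`; this is the decomposition of `P`. The linearization is
`diag(X - βᵢ) + (e ⊗ I) [W₁ ⋯ Wₙ]`, and the matrix determinant lemma
`det (A + U V) = det A * det (1 + V A⁻¹ U)` turns its determinant into
`∏ᵢ (X - βᵢ)^m * det (1 + ∑ᵢ Wᵢ / (X - βᵢ)) = det P`. The divisions take place in the fraction
field of `ℂ[X]`.
-/

open Polynomial Matrix Finset

namespace Lagrange

variable {F ι : Type*} [Field F] [DecidableEq ι] {s : Finset ι} {v : ι → F}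

theorem basis_eq_C_nodalWeight_mul_nodal_erase {i : ι} (hi : i ∈ s) :
    Lagrange.basis s v i = C (nodalWeight s v i) * nodal (s.erase i) v := by
  rw [basis_eq_prod_sub_inv_mul_nodal_div hi, nodal_erase_eq_nodal_div hi]

theorem eq_C_coeff_mul_nodal_add_interpolate (hvs : Set.InjOn v s) {f : F[X]}
    (hf : f.degree ≤ #s) :
    f = C (f.coeff #s) * nodal s v + interpolate s v fun i => f.eval (v i) := by
  set g := f - C (f.coeff #s) * nodal s v
  have hg : g.degree < #s := by
    refine (degree_lt_iff_coeff_zero _ _).2 fun k hk => ?_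
    rcases hk.lt_or_eq with hk | rfl
    · rw [coeff_sub, coeff_C_mul, coeff_eq_zero_of_degree_lt (hf.trans_lt (by exact_mod_cast hk)),
        coeff_eq_zero_of_natDegree_lt (natDegree_nodal.trans_lt hk), mul_zero, sub_zero]
    · rw [coeff_sub, coeff_C_mul, ← natDegree_nodal (v := v), nodal_monic.coeff_natDegree,
        natDegree_nodal, mul_one, sub_self]
  have hgv : ∀ i ∈ s, g.eval (v i) = f.eval (v i) := fun i hi => by
    simp [g, eval_nodal_at_node hi]
  rw [← eq_interpolate_of_eval_eq _ hvs hg hgv, add_sub_cancel]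

theorem eq_C_coeff_mul_nodal_add_sum (hvs : Set.InjOn v s) {f : F[X]} (hf : f.degree ≤ #s) :
    f = C (f.coeff #s) * nodal s v
      + ∑ i ∈ s, C (nodalWeight s v i * f.eval (v i)) * nodal (s.erase i) v := by
  conv_lhs => rw [eq_C_coeff_mul_nodal_add_interpolate hvs hf, interpolate_apply]
  congr 1
  refine sum_congr rfl fun i hi => ?_
  rw [basis_eq_C_nodalWeight_mul_nodal_erase hi, C_mul]
  ring

end Lagrange

theorem Matrix.eq_nodal_smul_add_sum_nodal_erase_smul {F ι κ : Type*} [Field F] [DecidableEq ι]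
    {s : Finset ι} {v : ι → F} (hvs : Set.InjOn v s) (P : Matrix κ κ F[X])
    (hP : ∀ a c, (P a c).degree ≤ #s) :
    P = Lagrange.nodal s v • (P.map fun p => p.coeff #s).map C
      + ∑ i ∈ s, Lagrange.nodal (s.erase i) v
          • (Lagrange.nodalWeight s v i • P.map (eval (v i))).map C := by
  ext a c
  conv_lhs => rw [Lagrange.eq_C_coeff_mul_nodal_add_sum hvs (hP a c)]
  simp [Matrix.sum_apply, mul_comm]

namespace Matrix

def stackedIdentity (ι κ K : Type*) [DecidableEq κ] [Zero K] [One K] : Matrix (ι × κ) κ K :=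
  of fun p c => if p.2 = c then 1 else 0

variable {K ι κ : Type*} [DecidableEq ι] [DecidableEq κ]

/-- For `dᵢ = x - βᵢ` and `Vᵢ = Wᵢ` this is the paper's `x I - D + (e ⊗ I_m) [W₁, …, Wₙ]`. -/
def secular [Zero K] [Add K] (d : ι → K) (V : ι → Matrix κ κ K) : Matrix (ι × κ) (ι × κ) K :=
  of fun p q => (if p = q then d p.1 else 0) + V q.1 p.2 q.2

def blockRow (V : ι → Matrix κ κ K) : Matrix κ (ι × κ) K :=
  of fun a q => V q.1 a q.2

variable [Fintype κ]

theorem secular_eq_diagonal_add_stackedIdentity_mul_blockRow [Semiring K] (d : ι → K)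
    (V : ι → Matrix κ κ K) :
    secular d V = diagonal (fun p => d p.1) + stackedIdentity ι κ K * blockRow V := by
  ext p q
  simp [secular, stackedIdentity, blockRow, diagonal_apply, Matrix.mul_apply, ite_mul]

variable [Fintype ι]

theorem blockRow_mul_diagonal_mul_stackedIdentity [CommSemiring K] (w : ι → K)
    (V : ι → Matrix κ κ K) :
    blockRow V * diagonal (fun p : ι × κ => w p.1) * stackedIdentity ι κ K = ∑ i, w i • V i := by
  ext a c
  simp [stackedIdentity, blockRow, diagonal_apply, Matrix.mul_apply, Matrix.sum_apply,
    Fintype.sum_prod_type, mul_comm]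

section Field

variable [Field K]

theorem det_prod_smul_one_add_sum (d : ι → K) (hd : ∀ i, d i ≠ 0) (V : ι → Matrix κ κ K) :
    det ((∏ i, d i) • (1 : Matrix κ κ K) + ∑ i, (∏ j ∈ univ.erase i, d j) • V i)
      = (∏ i, d i) ^ Fintype.card κ * det (1 + ∑ i, (d i)⁻¹ • V i) := by
  rw [← det_smul, smul_add, smul_sum]
  congr 2
  refine sum_congr rfl fun i _ => ?_
  rw [smul_smul, ← mul_prod_erase univ d (mem_univ i), mul_comm (d i), mul_assoc,
    mul_inv_cancel₀ (hd i), mul_one]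

theorem det_secular (d : ι → K) (hd : ∀ i, d i ≠ 0) (V : ι → Matrix κ κ K) :
    det (secular d V)
      = det ((∏ i, d i) • (1 : Matrix κ κ K) + ∑ i, (∏ j ∈ univ.erase i, d j) • V i) := by
  have hD : IsUnit (diagonal fun p : ι × κ => d p.1).det := by
    simpa [det_diagonal, prod_ne_zero_iff] using fun i _ => hd i
  have hD_inv : (diagonal fun p : ι × κ => d p.1)⁻¹ = diagonal fun p => (d p.1)⁻¹ :=
    inv_eq_right_inv (by simp [diagonal_mul_diagonal, hd])
  rw [secular_eq_diagonal_add_stackedIdentity_mul_blockRow, det_add_mul _ _ hD, hD_inv,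
    blockRow_mul_diagonal_mul_stackedIdentity (fun i => (d i)⁻¹), det_prod_smul_one_add_sum d hd,
    det_diagonal, Fintype.prod_prod_type]
  simp [prod_pow]

end Field

theorem det_secular_of_isDomain [CommRing K] [IsDomain K] (d : ι → K) (hd : ∀ i, d i ≠ 0)
    (V : ι → Matrix κ κ K) :
    det (secular d V)
      = det ((∏ i, d i) • (1 : Matrix κ κ K) + ∑ i, (∏ j ∈ univ.erase i, d j) • V i) := by
  let f := algebraMap K (FractionRing K)
  have hf_secular : f.mapMatrix (secular d V) = secular (fun i => f (d i)) fun i => (V i).map f := by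
    ext p q
    simp [secular, apply_ite f]
  have hf_sum : f.mapMatrix ((∏ i, d i) • 1 + ∑ i, (∏ j ∈ univ.erase i, d j) • V i)
      = (∏ i, f (d i)) • 1 + ∑ i, (∏ j ∈ univ.erase i, f (d j)) • (V i).map f := by
    ext a c
    simp [Matrix.sum_apply, one_apply, apply_ite f]
  apply IsFractionRing.injective K (FractionRing K)
  rw [RingHom.map_det, RingHom.map_det, hf_secular, hf_sum]
  exact det_secular _ (fun i => (map_ne_zero_iff f (IsFractionRing.injective K _)).2 (hd i)) _

end Matrix

/-- for a monic m×m matrix polynomial `P` of degree `n` and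
pairwise distinct `β₁,…,βₙ`, with `Wᵢ = P(βᵢ)/∏_{j≠i}(βᵢ−βⱼ)` one has
`P(x) = ∏ᵢ(x−βᵢ)I + Σᵢ Wᵢ ∏_{j≠i}(x−βⱼ)`, and consequently
`det P(x) = det(xI − D + (e⊗I)[W₁,…,Wₙ])` with `D = diag(β₁I,…,βₙI)`. -/
theorem secular_linearization_monic (m n : ℕ)
    (P : Matrix (Fin m) (Fin m) (Polynomial ℂ))
    (hPdeg : ∀ a c, (P a c).degree ≤ (n : WithBot ℕ))
    (hmonic : (Matrix.of fun a c : Fin m => (P a c).coeff n)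
      = (1 : Matrix (Fin m) (Fin m) ℂ))
    (β : Fin n → ℂ) (hβ : Function.Injective β) :
    P = (∏ i, (Polynomial.X - Polynomial.C (β i))) •
          (1 : Matrix (Fin m) (Fin m) (Polynomial ℂ))
        + ∑ i, ((Finset.univ.erase i).prod
            (fun j => Polynomial.X - Polynomial.C (β j))) •
          ((((Finset.univ.erase i).prod (fun j => β i - β j))⁻¹ •
            P.map (Polynomial.eval (β i))).map Polynomial.C) ∧
    P.det = Matrix.det (Matrix.of fun p₁ p₂ : Fin n × Fin m =>
      (if p₁ = p₂ then Polynomial.X - Polynomial.C (β p₁.1) else 0)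
      + Polynomial.C ((((Finset.univ.erase p₂.1).prod
            (fun j => β p₂.1 - β j))⁻¹ •
          P.map (Polynomial.eval (β p₂.1))) p₁.2 p₂.2)) := by
  have hP := P.eq_nodal_smul_add_sum_nodal_erase_smul (s := univ) hβ.injOn
    (by simpa using hPdeg)
  rw [card_univ, Fintype.card_fin, show P.map (fun p => p.coeff n) = 1 from hmonic,
    Matrix.map_one _ (map_zero C) (map_one C)] at hP
  simp only [Lagrange.nodal, Lagrange.nodalWeight, prod_inv_distrib] at hP
  refine ⟨hP, ?_⟩
  conv_lhs => rw [hP]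
  exact (det_secular_of_isDomain _ (fun i => X_sub_C_ne_zero (β i)) _).symm
end
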